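/- Let R, R_c : ℝ → ℝ^{3×3} be differentiable curves taking values in SO(3), and let Ω, Ω_c : ℝ → ℝ³ satisfy R'(t) = R(t)·Ω̂(t) and R_c'(t) = R_c(t)·Ω̂_c(t) for all t. Define e_R(t) = (1/2)(R_c(t)ᵀR(t) − R(t)ᵀR_c(t))∨ and e_Ω(t) = Ω(t) − R(t)ᵀR_c(t)Ω_c(t). Then e_R is differentiable with e_R'(t) = (1/2)(tr[R(t)ᵀR_c(t)]·I − R(t)ᵀR_c(t))·e_Ω(t) for all t. -/
import Mathlib


open Matrix BigOperators

/-- The hat map: `x̂ y = x × y`. -/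
def hat (x : Fin 3 → ℝ) : Matrix (Fin 3) (Fin 3) ℝ :=
  !![0, -x 2, x 1; x 2, 0, -x 0; -x 1, x 0, 0]

/-- The vee map: inverse of the hat map, `S∨ = (S₃₂, S₁₃, S₂₁)`. -/
def vee (S : Matrix (Fin 3) (Fin 3) ℝ) : Fin 3 → ℝ := ![S 2 1, S 0 2, S 1 0]

lemma hat_transpose (x : Fin 3 → ℝ) : (hat x)ᵀ = -(hat x) := by
  ext i j; fin_cases i <;> fin_cases j <;> simp [hat]

lemma hat_sub (x y : Fin 3 → ℝ) : hat (x - y) = hat x - hat y := by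
  ext i j; fin_cases i <;> fin_cases j <;> simp [hat] <;> ring

lemma vee_L1 (A : Matrix (Fin 3) (Fin 3) ℝ) (x : Fin 3 → ℝ) :
    vee (Aᵀ * hat x + hat x * A) = (A.trace • (1 : Matrix (Fin 3) (Fin 3) ℝ) - A) *ᵥ x := by
  funext i
  fin_cases i <;>
    simp [vee, hat, Matrix.mul_apply, Matrix.mulVec, dotProduct,
      Matrix.trace, Matrix.diag, Fin.sum_univ_three, Matrix.one_apply, Matrix.vecMul] <;> ring

lemma adj_eq (A : Matrix (Fin 3) (Fin 3) ℝ) (h1 : Aᵀ * A = 1) (hd : A.det = 1) :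
    Aᵀ = A.adjugate := by
  have h2 : A * Aᵀ = 1 := mul_eq_one_comm.mp h1
  calc Aᵀ = 1 * Aᵀ := (one_mul _).symm
    _ = (A.adjugate * A) * Aᵀ := by rw [Matrix.adjugate_mul, hd, one_smul]
    _ = A.adjugate * (A * Aᵀ) := by rw [Matrix.mul_assoc]
    _ = A.adjugate := by rw [h2, mul_one]

lemma hat_conj (A : Matrix (Fin 3) (Fin 3) ℝ) (h1 : Aᵀ * A = 1) (hd : A.det = 1)
    (v : Fin 3 → ℝ) : A * hat v * Aᵀ = hat (A *ᵥ v) := by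
  have h2 := adj_eq A h1 hd
  rw [Matrix.adjugate_fin_three] at h2
  have E : ∀ i j, A j i = (!![A 1 1 * A 2 2 - A 1 2 * A 2 1,
      -(A 0 1 * A 2 2) + A 0 2 * A 2 1,
      A 0 1 * A 1 2 - A 0 2 * A 1 1;
      -(A 1 0 * A 2 2) + A 1 2 * A 2 0,
      A 0 0 * A 2 2 - A 0 2 * A 2 0,
      -(A 0 0 * A 1 2) + A 0 2 * A 1 0;
      A 1 0 * A 2 1 - A 1 1 * A 2 0,
      -(A 0 0 * A 2 1) + A 0 1 * A 2 0,
      A 0 0 * A 1 1 - A 0 1 * A 1 0] : Matrix (Fin 3) (Fin 3) ℝ) i j := by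
    intro i j
    have := congrFun (congrFun h2 i) j
    simpa using this
  have p00 : A 0 0 = A 1 1 * A 2 2 - A 1 2 * A 2 1 := by simpa using E 0 0
  have p01 : A 0 1 = A 1 2 * A 2 0 - A 1 0 * A 2 2 := by have := E 1 0; simp at this; linarith
  have p02 : A 0 2 = A 1 0 * A 2 1 - A 1 1 * A 2 0 := by simpa using E 2 0
  have p10 : A 1 0 = A 2 1 * A 0 2 - A 2 2 * A 0 1 := by have := E 0 1; simp at this; linarith
  have p11 : A 1 1 = A 2 2 * A 0 0 - A 2 0 * A 0 2 := by have := E 1 1; simp at this; linarith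
  have p12 : A 1 2 = A 2 0 * A 0 1 - A 2 1 * A 0 0 := by have := E 2 1; simp at this; linarith
  have p20 : A 2 0 = A 0 1 * A 1 2 - A 0 2 * A 1 1 := by simpa using E 0 2
  have p21 : A 2 1 = A 0 2 * A 1 0 - A 0 0 * A 1 2 := by have := E 1 2; simp at this; linarith
  have p22 : A 2 2 = A 0 0 * A 1 1 - A 0 1 * A 1 0 := by simpa using E 2 2
  ext i j
  fin_cases i <;> fin_cases j <;>
    simp [hat, Matrix.mul_apply, Matrix.mulVec, dotProduct, Fin.sum_univ_three,
      Matrix.vecMul]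
  · ring
  · linear_combination (v 0) * p20 + (v 1) * p21 + (v 2) * p22
  · linear_combination (-(v 0)) * p10 + (-(v 1)) * p11 + (-(v 2)) * p12
  · linear_combination (-(v 0)) * p20 + (-(v 1)) * p21 + (-(v 2)) * p22
  · ring
  · linear_combination (v 0) * p00 + (v 1) * p01 + (v 2) * p02
  · linear_combination (v 0) * p10 + (v 1) * p11 + (v 2) * p12
  · linear_combination (-(v 0)) * p00 + (-(v 1)) * p01 + (-(v 2)) * p02
  · ring

/-- Along curves `R, R_c` in SO(3) with kinematics `Ṙ = RΩ̂`,
`Ṙ_c = R_cΩ̂_c`, the attitude error vector `e_R = (1/2)(R_cᵀR − RᵀR_c)∨`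
satisfies `ė_R = (1/2)(tr[RᵀR_c]I − RᵀR_c)e_Ω`. -/
theorem attitude_error_vector_derivative
    (R Rc : ℝ → Matrix (Fin 3) (Fin 3) ℝ) (Ω Ωc : ℝ → Fin 3 → ℝ)
    (hRso : ∀ t, (R t)ᵀ * R t = 1 ∧ (R t).det = 1)
    (hRcso : ∀ t, (Rc t)ᵀ * Rc t = 1 ∧ (Rc t).det = 1)
    (hR : ∀ t, ∀ i j, HasDerivAt (fun s => R s i j) ((R t * hat (Ω t)) i j) t)
    (hRc : ∀ t, ∀ i j, HasDerivAt (fun s => Rc s i j) ((Rc t * hat (Ωc t)) i j) t)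
    (eR : ℝ → Fin 3 → ℝ)
    (heR : ∀ t, eR t = vee ((1 / 2 : ℝ) • ((Rc t)ᵀ * R t - (R t)ᵀ * Rc t)))
    (eΩ : ℝ → Fin 3 → ℝ)
    (heΩ : ∀ t, eΩ t = Ω t - ((R t)ᵀ * Rc t) *ᵥ Ωc t) :
    ∀ t, ∀ i, HasDerivAt (fun s => eR s i)
      ((((1 / 2 : ℝ) • ((Matrix.trace ((R t)ᵀ * Rc t)) • (1 : Matrix (Fin 3) (Fin 3) ℝ)
        - (R t)ᵀ * Rc t)) *ᵥ eΩ t) i) t := by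
  intro t i
  have hR2 : R t * (R t)ᵀ = 1 := mul_eq_one_comm.mp (hRso t).1
  have hA1 : ((R t)ᵀ * Rc t)ᵀ * ((R t)ᵀ * Rc t) = 1 := by
    rw [Matrix.transpose_mul, Matrix.transpose_transpose]
    calc (Rc t)ᵀ * R t * ((R t)ᵀ * Rc t) = (Rc t)ᵀ * (R t * (R t)ᵀ) * Rc t := by
          rw [Matrix.mul_assoc, Matrix.mul_assoc, Matrix.mul_assoc]
      _ = (Rc t)ᵀ * Rc t := by rw [hR2, mul_one]
      _ = 1 := (hRcso t).1
  have hAd : ((R t)ᵀ * Rc t).det = 1 := by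
    rw [Matrix.det_mul, Matrix.det_transpose, (hRso t).2, (hRcso t).2, mul_one]
  have hz : ((R t)ᵀ * Rc t) * hat (Ωc t)
      = hat (((R t)ᵀ * Rc t) *ᵥ Ωc t) * ((R t)ᵀ * Rc t) := by
    have h3 := hat_conj _ hA1 hAd (Ωc t)
    calc ((R t)ᵀ * Rc t) * hat (Ωc t)
        = ((R t)ᵀ * Rc t) * hat (Ωc t) * (((R t)ᵀ * Rc t)ᵀ * ((R t)ᵀ * Rc t)) := by
          rw [hA1, mul_one]
      _ = (((R t)ᵀ * Rc t) * hat (Ωc t) * ((R t)ᵀ * Rc t)ᵀ) * ((R t)ᵀ * Rc t) := by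
          simp only [Matrix.mul_assoc]
      _ = hat (((R t)ᵀ * Rc t) *ᵥ Ωc t) * ((R t)ᵀ * Rc t) := by rw [h3]
  have hTA : ((R t)ᵀ * Rc t)ᵀ = (Rc t)ᵀ * R t := by
    rw [Matrix.transpose_mul, Matrix.transpose_transpose]
  have hz'' : hat (Ωc t) * ((Rc t)ᵀ * R t)
      = ((Rc t)ᵀ * R t) * hat (((R t)ᵀ * Rc t) *ᵥ Ωc t) := by
    have h := congrArg Matrix.transpose hz
    simp only [Matrix.transpose_mul, Matrix.transpose_transpose, hat_transpose,
      Matrix.neg_mul, Matrix.mul_neg] at h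
    exact neg_injective h
  have hz' : hat (Ωc t) * ((R t)ᵀ * Rc t)ᵀ
      = ((R t)ᵀ * Rc t)ᵀ * hat (((R t)ᵀ * Rc t) *ᵥ Ωc t) := by
    rw [hTA]; exact hz''
  have keyAbs : ∀ X Hv Hw Hz : Matrix (Fin 3) (Fin 3) ℝ, X * Hv = Hz * X →
      Hv * Xᵀ = Xᵀ * Hz →
      -(Hv * Xᵀ) + Xᵀ * Hw + Hw * X - X * Hv = Xᵀ * (Hw - Hz) + (Hw - Hz) * X := by
    intro X Hv Hw Hz h1 h2
    rw [h1, h2]; noncomm_ring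
  have key : (Rc t * hat (Ωc t))ᵀ * R t + (Rc t)ᵀ * (R t * hat (Ω t))
      - ((R t * hat (Ω t))ᵀ * Rc t + (R t)ᵀ * (Rc t * hat (Ωc t)))
      = ((R t)ᵀ * Rc t)ᵀ * hat (eΩ t) + hat (eΩ t) * ((R t)ᵀ * Rc t) := by
    rw [heΩ t, hat_sub]
    have step1 : (Rc t * hat (Ωc t))ᵀ * R t + (Rc t)ᵀ * (R t * hat (Ω t))
        - ((R t * hat (Ω t))ᵀ * Rc t + (R t)ᵀ * (Rc t * hat (Ωc t)))
        = -(hat (Ωc t) * ((R t)ᵀ * Rc t)ᵀ) + ((R t)ᵀ * Rc t)ᵀ * hat (Ω t)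
          + hat (Ω t) * ((R t)ᵀ * Rc t) - ((R t)ᵀ * Rc t) * hat (Ωc t) := by
      simp only [Matrix.transpose_mul, Matrix.transpose_transpose, hat_transpose]
      noncomm_ring
    rw [step1]
    exact keyAbs ((R t)ᵀ * Rc t) (hat (Ωc t)) (hat (Ω t))
      (hat (((R t)ᵀ * Rc t) *ᵥ Ωc t)) hz hz'
  have main : ∀ j : Fin 3,
      ((((1 / 2 : ℝ) • ((Matrix.trace ((R t)ᵀ * Rc t)) • (1 : Matrix (Fin 3) (Fin 3) ℝ)
        - (R t)ᵀ * Rc t)) *ᵥ eΩ t) j)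
      = (1 / 2 : ℝ) * vee ((Rc t * hat (Ωc t))ᵀ * R t + (Rc t)ᵀ * (R t * hat (Ω t))
        - ((R t * hat (Ω t))ᵀ * Rc t + (R t)ᵀ * (Rc t * hat (Ωc t)))) j := by
    intro j
    rw [key, vee_L1, Matrix.smul_mulVec]
    simp
  have HDgen : ∀ a b : Fin 3, HasDerivAt
      (fun s => (1 / 2 : ℝ) *
        (Rc s 0 a * R s 0 b + Rc s 1 a * R s 1 b + Rc s 2 a * R s 2 b
          - (R s 0 a * Rc s 0 b + R s 1 a * Rc s 1 b + R s 2 a * Rc s 2 b)))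
      ((1 / 2 : ℝ) *
        (((Rc t * hat (Ωc t)) 0 a * R t 0 b + Rc t 0 a * (R t * hat (Ω t)) 0 b
          + ((Rc t * hat (Ωc t)) 1 a * R t 1 b + Rc t 1 a * (R t * hat (Ω t)) 1 b)
          + ((Rc t * hat (Ωc t)) 2 a * R t 2 b + Rc t 2 a * (R t * hat (Ω t)) 2 b))
          - ((R t * hat (Ω t)) 0 a * Rc t 0 b + R t 0 a * (Rc t * hat (Ωc t)) 0 b
          + ((R t * hat (Ω t)) 1 a * Rc t 1 b + R t 1 a * (Rc t * hat (Ωc t)) 1 b)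
          + ((R t * hat (Ω t)) 2 a * Rc t 2 b + R t 2 a * (Rc t * hat (Ωc t)) 2 b)))) t := by
    intro a b
    exact (((((hRc t 0 a).mul (hR t 0 b)).add ((hRc t 1 a).mul (hR t 1 b))).add
      ((hRc t 2 a).mul (hR t 2 b))).sub
      ((((hR t 0 a).mul (hRc t 0 b)).add ((hR t 1 a).mul (hRc t 1 b))).add
      ((hR t 2 a).mul (hRc t 2 b)))).const_mul (1 / 2 : ℝ)
  fin_cases i
  · show HasDerivAt (fun s => eR s 0)
      ((((1 / 2 : ℝ) • ((Matrix.trace ((R t)ᵀ * Rc t)) • (1 : Matrix (Fin 3) (Fin 3) ℝ)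
        - (R t)ᵀ * Rc t)) *ᵥ eΩ t) 0) t
    have hfun : (fun s => eR s 0) = fun s => (1 / 2 : ℝ) *
        (Rc s 0 2 * R s 0 1 + Rc s 1 2 * R s 1 1 + Rc s 2 2 * R s 2 1
          - (R s 0 2 * Rc s 0 1 + R s 1 2 * Rc s 1 1 + R s 2 2 * Rc s 2 1)) := by
      funext s
      rw [heR s]
      simp [vee, Matrix.smul_apply, Matrix.sub_apply, Matrix.mul_apply,
        Fin.sum_univ_three, Matrix.transpose_apply]
      try ring
    rw [hfun]
    convert HDgen 2 1 using 1
    rw [main 0]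
    simp [vee, Matrix.add_apply, Matrix.sub_apply, Matrix.mul_apply,
      Matrix.transpose_apply, Fin.sum_univ_three]
    ring
  · show HasDerivAt (fun s => eR s 1)
      ((((1 / 2 : ℝ) • ((Matrix.trace ((R t)ᵀ * Rc t)) • (1 : Matrix (Fin 3) (Fin 3) ℝ)
        - (R t)ᵀ * Rc t)) *ᵥ eΩ t) 1) t
    have hfun : (fun s => eR s 1) = fun s => (1 / 2 : ℝ) *
        (Rc s 0 0 * R s 0 2 + Rc s 1 0 * R s 1 2 + Rc s 2 0 * R s 2 2
          - (R s 0 0 * Rc s 0 2 + R s 1 0 * Rc s 1 2 + R s 2 0 * Rc s 2 2)) := by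
      funext s
      rw [heR s]
      simp [vee, Matrix.smul_apply, Matrix.sub_apply, Matrix.mul_apply,
        Fin.sum_univ_three, Matrix.transpose_apply]
      try ring
    rw [hfun]
    convert HDgen 0 2 using 1
    rw [main 1]
    simp [vee, Matrix.add_apply, Matrix.sub_apply, Matrix.mul_apply,
      Matrix.transpose_apply, Fin.sum_univ_three]
    ring
  · show HasDerivAt (fun s => eR s 2)
      ((((1 / 2 : ℝ) • ((Matrix.trace ((R t)ᵀ * Rc t)) • (1 : Matrix (Fin 3) (Fin 3) ℝ)
        - (R t)ᵀ * Rc t)) *ᵥ eΩ t) 2) t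
    have hfun : (fun s => eR s 2) = fun s => (1 / 2 : ℝ) *
        (Rc s 0 1 * R s 0 0 + Rc s 1 1 * R s 1 0 + Rc s 2 1 * R s 2 0
          - (R s 0 1 * Rc s 0 0 + R s 1 1 * Rc s 1 0 + R s 2 1 * Rc s 2 0)) := by
      funext s
      rw [heR s]
      simp [vee, Matrix.smul_apply, Matrix.sub_apply, Matrix.mul_apply,
        Fin.sum_univ_three, Matrix.transpose_apply]
      try ring
    rw [hfun]
    convert HDgen 1 0 using 1
    rw [main 2]
    simp [vee, Matrix.add_apply, Matrix.sub_apply, Matrix.mul_apply,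
      Matrix.transpose_apply, Fin.sum_univ_three]
    ring
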